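/- Probabilistic modus ponens bound: for formulas P and Q, if μ(P) ≥ k and μ(P → Q) ≥ k with k ∈ (0,1], then μ(Q) ≥ (k − (1 − μ(P)))/μ(P) whenever μ(P) > 0; in particular, using the product rule μ(P→Q) = 1 − μ(P)(1−μ(Q)), μ(P) ≥ k and μ(P→Q) ≥ k imply μ(Q) ≥ 1 − (1−k)/k. -/

import Mathlib

/-- Propositional formulas built from atoms via ¬, ∨, →. -/
inductive Formula (A : Type) : Type
  | atom : A → Formula A
  | neg  : Formula A → Formula A
  | orr  : Formula A → Formula A → Formula A
  | imp  : Formula A → Formula A → Formula A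
deriving DecidableEq

/-- Well-formed sequences over a collection `V` of truth valuations. -/
inductive WFS (V : Type) : Type
  | leaf : V → WFS V
  | pair : WFS V → WFS V → WFS V
deriving DecidableEq

/-- Association between a WFS and a formula. -/
def Assoc {V A : Type} : WFS V → Formula A → Prop
  | WFS.leaf _, Formula.atom _ => True
  | s, Formula.neg β => Assoc s β
  | WFS.pair s₁ s₂, Formula.orr α β => Assoc s₁ α ∧ Assoc s₂ β
  | WFS.pair s₁ s₂, Formula.imp α β => Assoc s₁ α ∧ Assoc s₂ β
  | _, _ => False

/-- Justification of a formula by a WFS (PML semantics). -/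
def Justif {V A : Type} (val : V → A → Bool) : WFS V → Formula A → Prop
  | WFS.leaf v, Formula.atom a => val v a = true
  | s, Formula.neg β => ¬ Justif val s β
  | WFS.pair s₁ s₂, Formula.orr α β => Justif val s₁ α ∨ Justif val s₂ β
  | WFS.pair s₁ s₂, Formula.imp α β => ¬ Justif val s₁ α ∨ Justif val s₂ β
  | _, _ => False

/-- Multiplicative weight allotment extending a basic weight distribution. -/
def weight {V : Type} (pbar : V → ℝ) : WFS V → ℝ
  | WFS.leaf v => pbar v
  | WFS.pair s₁ s₂ => weight pbar s₁ * weight pbar s₂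

/-- The (finite) set of WFS associated to a formula. -/
def assocSeqs {V A : Type} [Fintype V] [DecidableEq V] : Formula A → Finset (WFS V)
  | Formula.atom _ => Finset.univ.image WFS.leaf
  | Formula.neg β => assocSeqs β
  | Formula.orr α β => (assocSeqs α ×ˢ assocSeqs β).image fun q => WFS.pair q.1 q.2
  | Formula.imp α β => (assocSeqs α ×ˢ assocSeqs β).image fun q => WFS.pair q.1 q.2

-- The logical measure of a formula: total weight of associated justifying sequences.
open scoped Classical in
noncomputable def mu {V A : Type} [Fintype V] [DecidableEq V]
    (pbar : V → ℝ) (val : V → A → Bool) (φ : Formula A) : ℝ :=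
  ∑ s ∈ (assocSeqs φ).filter (fun s => Justif val s φ), weight pbar s

/-- Derived conjunction: α ∧ β := ¬(¬α ∨ ¬β). -/
def Formula.conj {A : Type} (α β : Formula A) : Formula A :=
  Formula.neg (Formula.orr (Formula.neg α) (Formula.neg β))

/-- Classical Boolean semantics. -/
def evalF {A : Type} (v : A → Bool) : Formula A → Bool
  | Formula.atom a => v a
  | Formula.neg α => !(evalF v α)
  | Formula.orr α β => evalF v α || evalF v β
  | Formula.imp α β => !(evalF v α) || evalF v β

/-- Diagonal sequence: the valuation `v` at every leaf position of a formula. -/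
def diag {V A : Type} (v : V) : Formula A → WFS V
  | Formula.atom _ => WFS.leaf v
  | Formula.neg α => diag v α
  | Formula.orr α β => WFS.pair (diag v α) (diag v β)
  | Formula.imp α β => WFS.pair (diag v α) (diag v β)

/-- Number of atom occurrences in a formula. -/
def numAtoms {A : Type} : Formula A → ℕ
  | Formula.atom _ => 1
  | Formula.neg α => numAtoms α
  | Formula.orr α β => numAtoms α + numAtoms β
  | Formula.imp α β => numAtoms α + numAtoms β


/-!
The sequences associated with `P → Q` are the pairs `(s₁, s₂)` of sequences associated with `P`
and `Q`, and such a pair fails to justify `P → Q` exactly when `s₁` justifies `P` and `s₂` does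
not justify `Q`. Weights multiply and the associated sequences of every formula have total weight
`1`, so `μ(P → Q) = 1 − μ(P)(1 − μ(Q))`; the first bound is this identity rearranged. The second
follows from it because `(k − (1 − p)) / p = 1 − (1 − k) / p` increases with `p ≥ k`.
-/

namespace WFS

variable {V : Type}

theorem pair_injective :
    Function.Injective (fun q : WFS V × WFS V => WFS.pair q.1 q.2) :=
  fun _ _ h => Prod.ext (WFS.pair.inj h).1 (WFS.pair.inj h).2

theorem sum_weight_image_pair [DecidableEq V] (pbar : V → ℝ) (S T : Finset (WFS V)) :
    ∑ s ∈ (S ×ˢ T).image (fun q => WFS.pair q.1 q.2), weight pbar s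
      = (∑ s ∈ S, weight pbar s) * ∑ t ∈ T, weight pbar t := by
  rw [Finset.sum_image fun _ _ _ _ h => pair_injective h, Finset.sum_mul_sum,
    Finset.sum_product]
  rfl

end WFS

section Measure

variable {V A : Type} [Fintype V] [DecidableEq V] {pbar : V → ℝ}

theorem sum_weight_assocSeqs (hsum : ∑ v, pbar v = 1) :
    ∀ φ : Formula A, ∑ s ∈ assocSeqs (V := V) φ, weight pbar s = 1
  | .atom _ => by
    rw [assocSeqs, Finset.sum_image fun _ _ _ _ h => WFS.leaf.inj h]
    exact hsum
  | .neg φ => sum_weight_assocSeqs hsum φ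
  | .orr φ ψ | .imp φ ψ => by
    rw [assocSeqs, WFS.sum_weight_image_pair, sum_weight_assocSeqs hsum φ,
      sum_weight_assocSeqs hsum ψ, one_mul]

open scoped Classical in
theorem sum_weight_filter_not_justif (hsum : ∑ v, pbar v = 1) (val : V → A → Bool)
    (φ : Formula A) :
    ∑ s ∈ (assocSeqs φ).filter (fun s => ¬ Justif val s φ), weight pbar s
      = 1 - mu pbar val φ := by
  rw [mu, ← sum_weight_assocSeqs hsum φ,
    ← Finset.sum_filter_add_sum_filter_not (assocSeqs φ) (fun s => Justif val s φ)]
  ring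

open scoped Classical in
theorem filter_not_justif_imp (val : V → A → Bool) (P Q : Formula A) :
    (assocSeqs (V := V) (.imp P Q)).filter (fun s => ¬ Justif val s (.imp P Q))
      = (((assocSeqs P).filter (fun s => Justif val s P)) ×ˢ
          ((assocSeqs Q).filter (fun s => ¬ Justif val s Q))).image
        (fun q => WFS.pair q.1 q.2) := by
  ext s
  simp only [assocSeqs, Finset.mem_filter, Finset.mem_image, Finset.mem_product,
    Prod.exists]
  constructor
  · rintro ⟨⟨s₁, s₂, ⟨h₁, h₂⟩, rfl⟩, hs⟩
    simp only [Justif, not_or, not_not] at hs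
    exact ⟨s₁, s₂, ⟨⟨h₁, hs.1⟩, h₂, hs.2⟩, rfl⟩
  · rintro ⟨s₁, s₂, ⟨⟨h₁, hP⟩, h₂, hQ⟩, rfl⟩
    simp only [Justif, not_or, not_not]
    exact ⟨⟨s₁, s₂, ⟨h₁, h₂⟩, rfl⟩, hP, hQ⟩

theorem mu_imp (hsum : ∑ v, pbar v = 1) (val : V → A → Bool) (P Q : Formula A) :
    mu pbar val (.imp P Q) = 1 - mu pbar val P * (1 - mu pbar val Q) := by
  classical
  have h := sum_weight_filter_not_justif hsum val (.imp P Q)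
  rw [filter_not_justif_imp, WFS.sum_weight_image_pair,
    sum_weight_filter_not_justif hsum, ← mu] at h
  linarith

theorem div_le_mu_of_le_mu_imp (hsum : ∑ v, pbar v = 1) (val : V → A → Bool)
    {P Q : Formula A} {k : ℝ} (hP : 0 < mu pbar val P)
    (hPQ : k ≤ mu pbar val (.imp P Q)) :
    (k - (1 - mu pbar val P)) / mu pbar val P ≤ mu pbar val Q := by
  rw [mu_imp hsum] at hPQ
  rw [div_le_iff₀ hP]
  linarith

end Measure

theorem one_sub_div_le_div_of_le {k p : ℝ} (hk0 : 0 < k) (hk1 : k ≤ 1) (hkp : k ≤ p) :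
    1 - (1 - k) / k ≤ (k - (1 - p)) / p := by
  have hp : 0 < p := hk0.trans_le hkp
  calc 1 - (1 - k) / k ≤ 1 - (1 - k) / p := by gcongr
    _ = (k - (1 - p)) / p := by field_simp; ring

theorem stmt15_general {V A : Type} [Fintype V] [DecidableEq V] (pbar : V → ℝ)
    (val : V → A → Bool)
    (hsum : ∑ v, pbar v = 1)
    (P Q : Formula A) (k : ℝ) (hk0 : 0 < k) (hk1 : k ≤ 1)
    (hP : k ≤ mu pbar val P) (hPQ : k ≤ mu pbar val (Formula.imp P Q)) :
    (0 < mu pbar val P →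
      (k - (1 - mu pbar val P)) / mu pbar val P ≤ mu pbar val Q) ∧
    1 - (1 - k) / k ≤ mu pbar val Q := by
  have modus_ponens := fun hP0 => div_le_mu_of_le_mu_imp hsum val hP0 hPQ
  refine ⟨modus_ponens, ?_⟩
  exact (one_sub_div_le_div_of_le hk0 hk1 hP).trans (modus_ponens (hk0.trans_le hP))

/-- probabilistic modus ponens bound. -/
theorem stmt15 {V A : Type} [Fintype V] [DecidableEq V] (pbar : V → ℝ)
    (val : V → A → Bool)
    (hnn : ∀ v, 0 ≤ pbar v) (hsum : ∑ v, pbar v = 1)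
    (P Q : Formula A) (k : ℝ) (hk0 : 0 < k) (hk1 : k ≤ 1)
    (hP : k ≤ mu pbar val P) (hPQ : k ≤ mu pbar val (Formula.imp P Q)) :
    (0 < mu pbar val P →
      (k - (1 - mu pbar val P)) / mu pbar val P ≤ mu pbar val Q) ∧
    1 - (1 - k) / k ≤ mu pbar val Q :=
  stmt15_general pbar val hsum P Q k hk0 hk1 hP hPQ
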